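/- For the Hadamard graph with parameter γ (N = 16γ vertices, intersection array {4γ, 4γ−1, 2γ, 1; 1, 2γ, 4γ−1, 4γ}), the effective resistance between vertices at maximal distance 4 equals 2/(4γ−1). -/

import Mathlib

/-!
Write `ψ_α w = hadamardPotential γ (dist α w)`. By distance-regularity, `L ψ_α` at a vertex at
distance `i` from `α` only sees the layers `i - 1` and `i + 1`, weighted by `c i` and `b i`, and
the values of `hadamardPotential` solve this three-term recurrence with right-hand side
`δ_{i0} - 1/N`. Hence `x = ψ_α - ψ_β` satisfies `L x = e_α - e_β`, and for a Moore–Penrose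
inverse `L⁺` of the symmetric `L`,
`(e_α - e_β)ᵀ L⁺ (e_α - e_β) = xᵀ L L⁺ L x = xᵀ (e_α - e_β) = 2 (ψ 0 - ψ 4) = 2 / (4γ - 1)`.
-/

open Matrix

/-- The four Moore–Penrose pseudoinverse conditions for real matrices. -/
def IsMoorePenrose {V : Type*} [Fintype V] [DecidableEq V] (L Lp : Matrix V V ℝ) : Prop :=
  L * Lp * L = L ∧ Lp * L * Lp = Lp ∧ (L * Lp)ᵀ = L * Lp ∧ (Lp * L)ᵀ = Lp * L

/-- Effective resistance between two nodes, from the pseudoinverse of the Laplacian. -/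
def effRes {V : Type*} (Lp : Matrix V V ℝ) (α β : V) : ℝ :=
  Lp α α + Lp β β - 2 * Lp α β

/-- Distance-regularity with diameter `d` and intersection numbers `b i`, `c i`. -/
def IsDistanceRegular {V : Type*} [Fintype V] (G : SimpleGraph V) (d : ℕ) (b c : ℕ → ℕ) : Prop :=
  G.Connected ∧ (∀ α β : V, G.dist α β ≤ d) ∧
  ∀ i, i ≤ d → ∀ α β : V, G.dist α β = i →
    ({γ : V | G.Adj β γ ∧ G.dist α γ = i + 1}.ncard = b i ∧
     {γ : V | G.Adj β γ ∧ G.dist α γ = i - 1}.ncard = c i)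

namespace IsMoorePenrose

variable {V : Type*} [Fintype V] [DecidableEq V] {L A B : Matrix V V ℝ}

theorem transpose (hA : IsMoorePenrose L A) : IsMoorePenrose Lᵀ Aᵀ := by
  obtain ⟨h₁, h₂, h₃, h₄⟩ := hA
  refine ⟨?_, ?_, ?_, ?_⟩
  · rw [← transpose_mul, ← transpose_mul, ← Matrix.mul_assoc, h₁]
  · rw [← transpose_mul, ← transpose_mul, ← Matrix.mul_assoc, h₂]
  · rw [← transpose_mul]; exact congrArg Matrix.transpose h₄
  · rw [← transpose_mul]; exact congrArg Matrix.transpose h₃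

theorem unique (hA : IsMoorePenrose L A) (hB : IsMoorePenrose L B) : A = B := by
  obtain ⟨hA₁, hA₂, hA₃, hA₄⟩ := hA
  obtain ⟨hB₁, hB₂, hB₃, hB₄⟩ := hB
  have hLA : L * A = L * B :=
    calc L * A = (L * B * L * A)ᵀ := by rw [hB₁, hA₃]
      _ = (L * A)ᵀ * (L * B)ᵀ := by simp only [transpose_mul, Matrix.mul_assoc]
      _ = L * B := by rw [hA₃, hB₃, ← Matrix.mul_assoc, hA₁]
  have hAL : A * L = B * L :=
    calc A * L = (A * (L * B * L))ᵀ := by rw [hB₁, hA₄]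
      _ = (B * L)ᵀ * (A * L)ᵀ := by simp only [transpose_mul, Matrix.mul_assoc]
      _ = B * L := by rw [hA₄, hB₄, Matrix.mul_assoc, ← Matrix.mul_assoc L, hA₁]
  calc A = A * L * A := hA₂.symm
    _ = B * L * B := by rw [hAL, Matrix.mul_assoc, hLA, ← Matrix.mul_assoc]
    _ = B := hB₂

theorem transpose_eq_self (hL : L.IsSymm) (hA : IsMoorePenrose L A) : Aᵀ = A := by
  have hAt := hA.transpose
  rw [hL.eq] at hAt
  exact hAt.unique hA

end IsMoorePenrose

section EffectiveResistance

variable {V : Type*} [Fintype V] [DecidableEq V]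

theorem effRes_eq_dotProduct_mulVec {A : Matrix V V ℝ} (hA : A.IsSymm) (α β : V) :
    effRes A α β =
      (Pi.single α 1 - Pi.single β 1) ⬝ᵥ (A *ᵥ (Pi.single α 1 - Pi.single β 1)) := by
  have hβα : A β α = A α β := by rw [← hA.apply α β]
  simp only [effRes, mulVec_sub, mulVec_single_one, dotProduct_sub, sub_dotProduct,
    single_one_dotProduct, col_apply, hβα]
  ring

theorem IsMoorePenrose.effRes_eq_sub {L Lp : Matrix V V ℝ} (hL : L.IsSymm)
    (hLp : IsMoorePenrose L Lp) {α β : V} {x : V → ℝ}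
    (hx : L *ᵥ x = Pi.single α 1 - Pi.single β 1) :
    effRes Lp α β = x α - x β := by
  have hxL : x ᵥ* L = L *ᵥ x := by rw [← vecMul_transpose, hL.eq]
  rw [effRes_eq_dotProduct_mulVec (hLp.transpose_eq_self hL), ← hx]
  calc (L *ᵥ x) ⬝ᵥ (Lp *ᵥ (L *ᵥ x)) = x ⬝ᵥ ((L * Lp * L) *ᵥ x) := by
        rw [← mulVec_mulVec, ← mulVec_mulVec, dotProduct_mulVec x, hxL]
    _ = x α - x β := by
        rw [hLp.1, hx, dotProduct_sub, dotProduct_single, dotProduct_single, mul_one, mul_one]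

end EffectiveResistance

theorem sub_eq_ite_add_ite (ψ : ℕ → ℝ) {n m : ℕ} (h : m = n ∨ m = n + 1 ∨ m = n - 1) :
    ψ n - ψ m = (if m = n + 1 then ψ n - ψ (n + 1) else 0) +
      (if m = n - 1 then ψ n - ψ (n - 1) else 0) := by
  rcases h with rfl | rfl | rfl
  · by_cases hm : m = m - 1
    · simp [← hm]
    · simp [hm]
  · simp [show n + 1 ≠ n - 1 by omega]
  · by_cases hn : n = 0
    · simp [hn]
    · simp [show n - 1 ≠ n + 1 by omega]

open Finset in
theorem SimpleGraph.card_neighborFinset_filter_dist {V : Type*} [Fintype V] (G : SimpleGraph V)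
    [DecidableRel G.Adj] (α v : V) (j : ℕ) :
    #{w ∈ G.neighborFinset v | G.dist α w = j} = {w : V | G.Adj v w ∧ G.dist α w = j}.ncard := by
  rw [← Set.ncard_coe_finset]
  congr 1
  ext w
  simp

namespace IsDistanceRegular

variable {V : Type*} [Fintype V] [DecidableEq V] {G : SimpleGraph V} [DecidableRel G.Adj]
  {d : ℕ} {b c : ℕ → ℕ}

theorem lapMatrix_mulVec_comp_dist (hG : IsDistanceRegular G d b c) (ψ : ℕ → ℝ) (α v : V) :
    (G.lapMatrix ℝ *ᵥ fun w => ψ (G.dist α w)) v =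
      b (G.dist α v) * (ψ (G.dist α v) - ψ (G.dist α v + 1)) +
        c (G.dist α v) * (ψ (G.dist α v) - ψ (G.dist α v - 1)) := by
  set i := G.dist α v
  obtain ⟨hb, hc⟩ := hG.2.2 i (hG.2.1 α v) α v rfl
  have hlayers : ∀ w ∈ G.neighborFinset v, ψ i - ψ (G.dist α w) =
      (if G.dist α w = i + 1 then ψ i - ψ (i + 1) else 0) +
        (if G.dist α w = i - 1 then ψ i - ψ (i - 1) else 0) := fun w hw =>
    sub_eq_ite_add_ite ψ ((G.mem_neighborFinset v w).1 hw).diff_dist_adj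
  rw [SimpleGraph.lapMatrix_mulVec_apply, ← G.card_neighborFinset_eq_degree, ← nsmul_eq_mul,
    ← Finset.sum_const, ← Finset.sum_sub_distrib, Finset.sum_congr rfl hlayers,
    Finset.sum_add_distrib, ← Finset.sum_filter, ← Finset.sum_filter, Finset.sum_const,
    Finset.sum_const, nsmul_eq_mul, nsmul_eq_mul, G.card_neighborFinset_filter_dist,
    G.card_neighborFinset_filter_dist, hb, hc]

end IsDistanceRegular

/-- Normalised so that `ψ 4 = 0`; the drops `ψ i - ψ (i + 1) = (N - ∑_{l ≤ i} κ_l) / (N κ_i b_i)`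
are the paper's resistance increments `(R_{i+1} - R_i) / 2`. -/
noncomputable def hadamardPotential (γ : ℝ) : ℕ → ℝ
  | 0 => 1 / (4 * γ - 1)
  | 1 => (20 * γ - 1) / (64 * γ ^ 2 * (4 * γ - 1))
  | 2 => 1 / (8 * γ * (4 * γ - 1))
  | 3 => 1 / (64 * γ ^ 2)
  | _ => 0

theorem hadamardPotential_balance {γ : ℕ} (hγ : 1 ≤ γ) {i : ℕ} (hi : i ≤ 4) :
    ([4 * γ, 4 * γ - 1, 2 * γ, 1].getD i 0 : ℝ) *
        (hadamardPotential γ i - hadamardPotential γ (i + 1)) +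
      ([0, 1, 2 * γ, 4 * γ - 1, 4 * γ].getD i 0 : ℝ) *
        (hadamardPotential γ i - hadamardPotential γ (i - 1)) =
      (if i = 0 then 1 else 0) - 1 / (16 * γ) := by
  have hγ' : (1 : ℝ) ≤ γ := by exact_mod_cast hγ
  have hγ0 : (γ : ℝ) ≠ 0 := by positivity
  have h4γ : (4 * γ - 1 : ℝ) ≠ 0 := by linarith
  have h4γ' : (γ * 4 - 1 : ℝ) ≠ 0 := by linarith
  interval_cases i <;>
    simp only [hadamardPotential, List.getD_cons_zero, List.getD_cons_succ, reduceIte,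
      Nat.reduceAdd, Nat.reduceSub, Nat.cast_sub (by omega : 1 ≤ 4 * γ)]
    <;> push_cast <;> field_simp <;> ring

theorem IsDistanceRegular.lapMatrix_mulVec_hadamardPotential {V : Type*} [Fintype V]
    [DecidableEq V] {G : SimpleGraph V} [DecidableRel G.Adj] {γ : ℕ} (hγ : 1 ≤ γ)
    (hG : IsDistanceRegular G 4
      (fun i => [4 * γ, 4 * γ - 1, 2 * γ, 1].getD i 0)
      (fun i => [0, 1, 2 * γ, 4 * γ - 1, 4 * γ].getD i 0)) (α v : V) :
    (G.lapMatrix ℝ *ᵥ fun w => hadamardPotential γ (G.dist α w)) v =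
      (Pi.single α 1 : V → ℝ) v - 1 / (16 * γ) := by
  rw [hG.lapMatrix_mulVec_comp_dist, hadamardPotential_balance hγ (hG.2.1 α v)]
  simp only [hG.1.dist_eq_zero_iff, Pi.single_apply, @eq_comm _ v α]

theorem hadamard_antipodal_resistance_general {V : Type*} [Fintype V] [DecidableEq V]
    (G : SimpleGraph V) [DecidableRel G.Adj] (γ : ℕ) (hγ : 1 ≤ γ)
    (hdr : IsDistanceRegular G 4
      (fun i => [4 * γ, 4 * γ - 1, 2 * γ, 1].getD i 0)
      (fun i => [0, 1, 2 * γ, 4 * γ - 1, 4 * γ].getD i 0))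
    (Lp : Matrix V V ℝ) (hLp : IsMoorePenrose (G.lapMatrix ℝ) Lp)
    (α β : V) (hd : G.dist α β = 4) :
    effRes Lp α β = 2 / (4 * (γ : ℝ) - 1) := by
  have hx : G.lapMatrix ℝ *ᵥ (fun w => hadamardPotential γ (G.dist α w) -
      hadamardPotential γ (G.dist β w)) = Pi.single α 1 - Pi.single β 1 := by
    ext v
    rw [← Pi.sub_def, mulVec_sub, Pi.sub_apply, hdr.lapMatrix_mulVec_hadamardPotential hγ,
      hdr.lapMatrix_mulVec_hadamardPotential hγ, Pi.sub_apply, sub_sub_sub_cancel_right]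
  rw [hLp.effRes_eq_sub (G.isSymm_lapMatrix (R := ℝ)) hx]
  simp only [SimpleGraph.dist_self, SimpleGraph.dist_comm (u := β), hd, hadamardPotential]
  ring

/-- For the Hadamard graph with parameter `γ` (`N = 16γ` vertices, intersection array
`{4γ, 4γ-1, 2γ, 1; 1, 2γ, 4γ-1, 4γ}`), the effective resistance between vertices at the
maximal distance 4 equals `2/(4γ - 1)`. -/
theorem hadamard_antipodal_resistance {V : Type*} [Fintype V] [DecidableEq V]
    (G : SimpleGraph V) [DecidableRel G.Adj] (γ : ℕ) (hγ : 1 ≤ γ)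
    (hN : Fintype.card V = 16 * γ)
    (hdr : IsDistanceRegular G 4
      (fun i => [4 * γ, 4 * γ - 1, 2 * γ, 1].getD i 0)
      (fun i => [0, 1, 2 * γ, 4 * γ - 1, 4 * γ].getD i 0))
    (Lp : Matrix V V ℝ) (hLp : IsMoorePenrose (G.lapMatrix ℝ) Lp)
    (α β : V) (hd : G.dist α β = 4) :
    effRes Lp α β = 2 / (4 * (γ : ℝ) - 1) :=
  hadamard_antipodal_resistance_general G γ hγ hdr Lp hLp α β hd
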